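/- arXiv:2303.00618 — 3 statements merged into one kernel-verified Lean document; each statement's English description precedes it below -/
import Mathlib

section
/- Let H₁, H₂, H₃, H₄ be d×d complex Hermitian matrices, let ψ₀ ∈ ℂ^d be a unit vector, and for ε ∈ ℝ⁴ define ψ(ε) = exp(−i(1+ε₁)H₁)·exp(−i(1+ε₂)H₂)·exp(−i(1+ε₃)H₃)·exp(−i(1+ε₄)H₄)·ψ₀. Then ‖H₁‖₂ + √2·‖[H₂ H₃]‖₂ + ‖H₄‖₂ is a Lipschitz bound of ψ with respect to the ∞-norm, i.e. for all ε, ε′ ∈ ℝ⁴: ‖ψ(ε) − ψ(ε′)‖₂ ≤ (‖H₁‖₂ + √2·‖[H₂ H₃]‖₂ + ‖H₄‖₂)·‖ε − ε′‖_∞. -/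
set_option autoImplicit false

open scoped Matrix

/-- The operator norm (induced 2-norm, i.e. maximum singular value) of a complex matrix. -/
noncomputable def opNorm {m n : Type*} [Fintype m] [Fintype n] [DecidableEq n]
    (A : Matrix m n ℂ) : ℝ :=
  ‖LinearMap.toContinuousLinearMap (Matrix.toEuclideanLin A)‖

/-- The noisy circuit state `ψ(ε) = exp(−i(1+ε₁)H₁) ⋯ exp(−i(1+ε_N)H_N) ψ₀`
(ordered matrix product applied to `ψ₀`). -/
noncomputable def circuitState {d N : ℕ} (H : Fin N → Matrix (Fin d) (Fin d) ℂ)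
    (ψ₀ : EuclideanSpace ℂ (Fin d)) (ε : Fin N → ℝ) : EuclideanSpace ℂ (Fin d) :=
  Matrix.toEuclideanLin
    (List.ofFn fun i => NormedSpace.exp ((-Complex.I * (1 + (ε i : ℂ))) • H i)).prod ψ₀

/-!
The state is `P(ε) ψ₀` for the operator product `P(ε) = U₁ U₂ U₃ U₄`, `Uₖ = exp(-i(1+εₖ)Hₖ)`,
all factors unitary. Telescoping `P(ε) - P(ε')` around the block `U₂ U₃` bounds it by
`‖U₁ - U₁'‖ + ‖U₂ U₃ - U₂' U₃'‖ + ‖U₄ - U₄'‖`. Along the segment from `ε'` to `ε = ε' + δ` the derivative of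
`U₂ U₃` is `U₂ (-i(δ₂ H₂ + δ₃ H₃)) U₃` because `H₃` commutes with `U₃`, so the mean value
inequality gives `‖U₂ U₃ - U₂' U₃'‖ ≤ ‖δ₂ H₂ + δ₃ H₃‖`; finally
`δ₂ H₂ + δ₃ H₃ = [H₂ H₃] [δ₂ I; δ₃ I]` has norm at most `√(δ₂² + δ₃²) ‖[H₂ H₃]‖ ≤ √2 ‖δ‖_∞ ‖[H₂ H₃]‖`.
-/

section Propagator

open NormedSpace

variable {A : Type*} [CStarAlgebra A]

-- The algebraic lemmas on `NormedSpace.exp` are stated for normed `ℚ`-algebras.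
noncomputable local instance : NormedAlgebra ℚ A := NormedAlgebra.restrictScalars ℚ ℂ A

noncomputable def propagator (a : A) (s : ℝ) : A := exp (s • (-Complex.I • a))

lemma propagator_mem_unitary {a : A} (ha : IsSelfAdjoint a) (s : ℝ) :
    propagator a s ∈ unitary A := by
  refine exp_mem_unitary_of_mem_skewAdjoint (skewAdjoint.smul_mem s ?_)
  refine ha.smul_mem_skewAdjoint ?_
  simp [skewAdjoint.mem_iff]

lemma propagator_zero_left (s : ℝ) : propagator (0 : A) s = 1 := by
  simp [propagator]

lemma hasDerivAt_propagator (a : A) (s : ℝ) :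
    HasDerivAt (propagator a) (propagator a s * (-Complex.I • a)) s :=
  hasDerivAt_exp_smul_const _ s

lemma commute_propagator_self (a : A) (s : ℝ) : Commute (propagator a s) a :=
  (((Commute.refl a).smul_left _).smul_left _).exp_left

lemma norm_mul_sub_mul_le_of_mem_unitary {u v u' v' : A} (hv : v ∈ unitary A)
    (hu' : u' ∈ unitary A) : ‖u * v - u' * v'‖ ≤ ‖u - u'‖ + ‖v - v'‖ := by
  calc ‖u * v - u' * v'‖ = ‖(u - u') * v + u' * (v - v')‖ := by noncomm_ring
    _ ≤ ‖(u - u') * v‖ + ‖u' * (v - v')‖ := norm_add_le _ _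
    _ = ‖u - u'‖ + ‖v - v'‖ := by
      rw [CStarRing.norm_mul_mem_unitary _ hv, CStarRing.norm_mem_unitary_mul _ hu']

lemma norm_propagator_mul_propagator_sub_le {a b : A} (ha : IsSelfAdjoint a)
    (hb : IsSelfAdjoint b) (s t s' t' : ℝ) :
    ‖propagator a s * propagator b t - propagator a s' * propagator b t'‖ ≤
      ‖(s - s') • a + (t - t') • b‖ := by
  set f : ℝ → A := fun τ =>
    propagator a (s' + τ * (s - s')) * propagator b (t' + τ * (t - t'))
  have hf : ∀ τ, HasDerivAt f (propagator a (s' + τ * (s - s')) *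
      (-Complex.I • ((s - s') • a + (t - t') • b)) * propagator b (t' + τ * (t - t'))) τ := by
    intro τ
    have hpath : ∀ r r' : ℝ, HasDerivAt (fun τ : ℝ => r' + τ * (r - r')) (r - r') τ := by
      intro r r'
      simpa using ((hasDerivAt_id τ).mul_const (r - r')).const_add r'
    have := ((hasDerivAt_propagator a _).scomp τ (hpath s s')).mul
      ((hasDerivAt_propagator b _).scomp τ (hpath t t'))
    refine this.congr_deriv ?_
    rw [Function.comp_apply, Function.comp_apply, mul_smul_comm (-Complex.I) (propagator b _),
      (commute_propagator_self b _).eq]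
    simp only [smul_add, mul_add, add_mul, mul_smul_comm, smul_mul_assoc, mul_assoc]
    rw [smul_comm (s - s') (-Complex.I), smul_comm (t - t') (-Complex.I)]
  have hbound : ∀ τ ∈ Set.Ico (0 : ℝ) 1, ‖propagator a (s' + τ * (s - s')) *
      (-Complex.I • ((s - s') • a + (t - t') • b)) * propagator b (t' + τ * (t - t'))‖ ≤
      ‖(s - s') • a + (t - t') • b‖ := by
    intro τ _
    rw [CStarRing.norm_mul_mem_unitary _ (propagator_mem_unitary hb _),
      CStarRing.norm_mem_unitary_mul _ (propagator_mem_unitary ha _), norm_smul]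
    simp
  simpa [f] using norm_image_sub_le_of_norm_deriv_le_segment_01'
    (fun τ _ => (hf τ).hasDerivWithinAt) hbound

lemma norm_propagator_sub_le {a : A} (ha : IsSelfAdjoint a) (s s' : ℝ) :
    ‖propagator a s - propagator a s'‖ ≤ |s - s'| * ‖a‖ := by
  simpa [propagator_zero_left, norm_smul] using
    norm_propagator_mul_propagator_sub_le ha (.zero A) s 0 s' 0

lemma norm_prod_propagator_four_sub_le {a : Fin 4 → A} (ha : ∀ i, IsSelfAdjoint (a i))
    (s s' : Fin 4 → ℝ) :
    ‖(List.ofFn fun i => propagator (a i) (s i)).prod -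
        (List.ofFn fun i => propagator (a i) (s' i)).prod‖ ≤
      |s 0 - s' 0| * ‖a 0‖ + ‖(s 1 - s' 1) • a 1 + (s 2 - s' 2) • a 2‖ +
        |s 3 - s' 3| * ‖a 3‖ := by
  have hU : ∀ i r, propagator (a i) r ∈ unitary A := fun i => propagator_mem_unitary (ha i)
  simp only [List.ofFn_succ, List.ofFn_zero, List.prod_cons, List.prod_nil, mul_one, Fin.reduceSucc]
  simp only [← mul_assoc (propagator (a 1) _)]
  calc _ ≤ ‖propagator (a 0) (s 0) - propagator (a 0) (s' 0)‖ +
        ‖propagator (a 1) (s 1) * propagator (a 2) (s 2) * propagator (a 3) (s 3) -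
          propagator (a 1) (s' 1) * propagator (a 2) (s' 2) * propagator (a 3) (s' 3)‖ :=
        norm_mul_sub_mul_le_of_mem_unitary
          (mul_mem (mul_mem (hU 1 _) (hU 2 _)) (hU 3 _)) (hU 0 _)
    _ ≤ ‖propagator (a 0) (s 0) - propagator (a 0) (s' 0)‖ +
        (‖propagator (a 1) (s 1) * propagator (a 2) (s 2) -
          propagator (a 1) (s' 1) * propagator (a 2) (s' 2)‖ +
        ‖propagator (a 3) (s 3) - propagator (a 3) (s' 3)‖) := by
        gcongr
        exact norm_mul_sub_mul_le_of_mem_unitary (hU 3 _)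
          (mul_mem (hU 1 _) (hU 2 _))
    _ ≤ _ := by
        have := norm_propagator_sub_le (ha 0) (s 0) (s' 0)
        have := norm_propagator_mul_propagator_sub_le (ha 1) (ha 2) (s 1) (s 2) (s' 1) (s' 2)
        have := norm_propagator_sub_le (ha 3) (s 3) (s' 3)
        linarith

end Propagator

open Matrix

lemma EuclideanSpace.norm_toLp_sumElim_smul {𝕜 n : Type*} [RCLike 𝕜] [Fintype n] (b c : 𝕜)
    (x : EuclideanSpace 𝕜 n) :
    ‖WithLp.toLp 2 (Sum.elim (b • ⇑x) (c • ⇑x))‖ = √(‖b‖ ^ 2 + ‖c‖ ^ 2) * ‖x‖ := by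
  rw [EuclideanSpace.norm_eq, EuclideanSpace.norm_eq, ← Real.sqrt_mul (by positivity),
    Fintype.sum_sum_type, add_mul, Finset.mul_sum, Finset.mul_sum]
  simp [norm_mul, mul_pow]

lemma opNorm_smul_add_smul_le {m n : Type*} [Fintype m] [Fintype n] [DecidableEq n]
    (B C : Matrix m n ℂ) (b c : ℂ) :
    opNorm (b • B + c • C) ≤ √(‖b‖ ^ 2 + ‖c‖ ^ 2) * opNorm (fromCols B C) := by
  refine ContinuousLinearMap.opNorm_le_bound _ (by unfold opNorm; positivity) fun x => ?_
  set y := WithLp.toLp 2 (Sum.elim (b • ⇑x) (c • ⇑x))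
  have hy : toEuclideanLin (fromCols B C) y = toEuclideanLin (b • B + c • C) x := by
    simp [y, toLpLin_apply, mulVec_smul]
  calc ‖toEuclideanLin (b • B + c • C) x‖ = ‖toEuclideanLin (fromCols B C) y‖ := by rw [hy]
    _ ≤ opNorm (fromCols B C) * ‖y‖ :=
      (LinearMap.toContinuousLinearMap (toEuclideanLin (fromCols B C))).le_opNorm y
    _ = √(‖b‖ ^ 2 + ‖c‖ ^ 2) * opNorm (fromCols B C) * ‖x‖ := by
      rw [EuclideanSpace.norm_toLp_sumElim_smul]; ring

lemma opNorm_nonneg {m n : Type*} [Fintype m] [Fintype n] [DecidableEq n] (M : Matrix m n ℂ) :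
    0 ≤ opNorm M :=
  norm_nonneg _

lemma opNorm_eq_norm_toEuclideanCLM {n : Type*} [Fintype n] [DecidableEq n] (M : Matrix n n ℂ) :
    opNorm M = ‖toEuclideanCLM (𝕜 := ℂ) M‖ :=
  rfl

lemma Matrix.toEuclideanCLM_exp {n : Type*} [Fintype n] [DecidableEq n] (M : Matrix n n ℂ) :
    toEuclideanCLM (𝕜 := ℂ) (NormedSpace.exp M) =
      NormedSpace.exp (toEuclideanCLM (𝕜 := ℂ) M) := by
  open scoped Norms.Operator in
  exact NormedSpace.map_exp (toEuclideanCLM (𝕜 := ℂ) (n := n))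
    (LinearMap.continuous_of_finiteDimensional
      (toEuclideanCLM (𝕜 := ℂ) (n := n)).toAlgEquiv.toLinearMap) M

lemma circuitState_eq_prod_propagator {d N : ℕ} (H : Fin N → Matrix (Fin d) (Fin d) ℂ)
    (ψ₀ : EuclideanSpace ℂ (Fin d)) (ε : Fin N → ℝ) :
    circuitState H ψ₀ ε =
      (List.ofFn fun i => propagator (toEuclideanCLM (𝕜 := ℂ) (H i)) (1 + ε i)).prod ψ₀ := by
  change toEuclideanCLM (𝕜 := ℂ) _ ψ₀ = _
  rw [map_list_prod, List.map_ofFn]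
  congr 3
  ext i
  rw [Function.comp_apply, Matrix.toEuclideanCLM_exp, map_smul, propagator, ← Complex.coe_smul,
    smul_smul]
  push_cast
  rw [mul_comm]

lemma Real.sqrt_sq_add_sq_le_sqrt_two_mul {x y M : ℝ} (hx : |x| ≤ M) (hy : |y| ≤ M) :
    √(x ^ 2 + y ^ 2) ≤ √2 * M := by
  have hM : 0 ≤ M := (abs_nonneg x).trans hx
  rw [← Real.sqrt_sq hM, ← Real.sqrt_mul zero_le_two]
  gcongr
  nlinarith [sq_le_sq' (abs_le.mp hx).1 (abs_le.mp hx).2, sq_le_sq' (abs_le.mp hy).1 (abs_le.mp hy).2]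

/-- mixed-block variant of Theorem 3 of the paper, N = 4:
`‖H₁‖₂ + √2·‖[H₂ H₃]‖₂ + ‖H₄‖₂` is a Lipschitz bound of `ψ` w.r.t. the ∞-norm,
where `[H₂ H₃]` is the horizontal concatenation `Matrix.fromColumns H₂ H₃`. -/
theorem mixed_block_lipschitz_bound_four {d : ℕ}
    (H₁ H₂ H₃ H₄ : Matrix (Fin d) (Fin d) ℂ)
    (h₁ : H₁.IsHermitian) (h₂ : H₂.IsHermitian) (h₃ : H₃.IsHermitian) (h₄ : H₄.IsHermitian)
    (ψ₀ : EuclideanSpace ℂ (Fin d)) (hψ₀ : ‖ψ₀‖ = 1) (ε ε' : Fin 4 → ℝ) :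
    ‖circuitState ![H₁, H₂, H₃, H₄] ψ₀ ε - circuitState ![H₁, H₂, H₃, H₄] ψ₀ ε'‖ ≤
      (opNorm H₁ + Real.sqrt 2 * opNorm (Matrix.fromCols H₂ H₃) + opNorm H₄) * ‖ε - ε'‖ := by
  have hδ (i : Fin 4) : |ε i - ε' i| ≤ ‖ε - ε'‖ := by
    simpa using norm_le_pi_norm (ε - ε') i
  have hH (i : Fin 4) : IsSelfAdjoint (toEuclideanCLM (𝕜 := ℂ) (![H₁, H₂, H₃, H₄] i)) := by
    fin_cases i
    exacts [h₁.isSelfAdjoint.map _, h₂.isSelfAdjoint.map _, h₃.isSelfAdjoint.map _,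
      h₄.isSelfAdjoint.map _]
  have hmid : ‖(ε 1 - ε' 1) • toEuclideanCLM (𝕜 := ℂ) H₂ +
      (ε 2 - ε' 2) • toEuclideanCLM (𝕜 := ℂ) H₃‖ ≤
      √2 * ‖ε - ε'‖ * opNorm (fromCols H₂ H₃) := by
    calc _ = opNorm (((ε 1 - ε' 1 : ℝ) : ℂ) • H₂ + ((ε 2 - ε' 2 : ℝ) : ℂ) • H₃) := by
          rw [opNorm_eq_norm_toEuclideanCLM, map_add, map_smul, map_smul]; rfl
      _ ≤ √((ε 1 - ε' 1) ^ 2 + (ε 2 - ε' 2) ^ 2) * opNorm (fromCols H₂ H₃) := by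
          simpa only [Complex.norm_real, Real.norm_eq_abs, sq_abs] using
            opNorm_smul_add_smul_le H₂ H₃ (ε 1 - ε' 1 : ℝ) (ε 2 - ε' 2 : ℝ)
      _ ≤ _ := by gcongr; exacts [opNorm_nonneg _, Real.sqrt_sq_add_sq_le_sqrt_two_mul (hδ 1) (hδ 2)]
  have hfirst := mul_le_mul_of_nonneg_right (hδ 0) (opNorm_nonneg H₁)
  have hlast := mul_le_mul_of_nonneg_right (hδ 3) (opNorm_nonneg H₄)
  rw [circuitState_eq_prod_propagator, circuitState_eq_prod_propagator, ← _root_.sub_apply]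
  refine ((ContinuousLinearMap.le_opNorm _ ψ₀).trans_eq (by rw [hψ₀, mul_one])).trans ?_
  refine (norm_prod_propagator_four_sub_le hH (1 + ε) (1 + ε')).trans ?_
  simp only [Pi.add_apply, add_sub_add_left_eq_sub, Matrix.cons_val]
  rw [← opNorm_eq_norm_toEuclideanCLM, ← opNorm_eq_norm_toEuclideanCLM]
  linarith
end

section
/- Let H₁, …, H_N be d×d complex Hermitian matrices, let ψ₀ ∈ ℂ^d be a unit vector, and for ε ∈ ℝ^N define ψ(ε) = exp(−i(1+ε₁)H₁)···exp(−i(1+ε_N)H_N)·ψ₀, with ideal state ψ̂ = ψ(0). Let ε̄ ≥ 0 satisfy ‖H_i‖₂·ε̄ ≤ π/2 for all i and Σ_{i=1}^N sin(‖H_i‖₂·ε̄) ≤ 1. Then for every ε ∈ ℝ^N with ‖ε‖_∞ ≤ ε̄: |⟨ψ(ε), ψ̂⟩| ≥ √(1 − (Σ_{i=1}^N sin(‖H_i‖₂·ε̄))²). -/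
set_option autoImplicit false

open scoped Matrix

/-!
The quantity `D(x, y) = √(1 - ‖⟪x, y⟫‖²)` satisfies the triangle inequality on unit vectors:
projecting `a` and `c` onto the orthogonal complement of `b` gives residuals of norms `D(a, b)` and
`D(b, c)` whose inner product is `⟪a, c⟫ - ⟪a, b⟫⟪b, c⟫`, and Cauchy–Schwarz does the rest.
Peeling off the first gate, unitary invariance and the triangle inequality bound `D(ψ(ε), ψ̂)` by
the error of the remaining circuit plus one single-gate term `D(φ, exp(iεH) φ)`. Diagonalising
`H`, `Re ⟪φ, exp(iεH) φ⟫` is a convex combination of the `cos(ε λⱼ) ≥ cos(‖H‖₂ |ε|)`, so each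
single-gate term is at most `sin(‖H‖₂ |ε|)`.
-/

open Real Matrix

lemma sqrt_one_sub_sq_le_add {x y z : ℝ} (hx₀ : 0 ≤ x) (hx₁ : x ≤ 1) (hy₀ : 0 ≤ y) (hy₁ : y ≤ 1)
    (hz : x * y - √(1 - x ^ 2) * √(1 - y ^ 2) ≤ z) :
    √(1 - z ^ 2) ≤ √(1 - x ^ 2) + √(1 - y ^ 2) := by
  set s := √(1 - x ^ 2)
  set t := √(1 - y ^ 2)
  have hs₀ : 0 ≤ s := sqrt_nonneg _
  have ht₀ : 0 ≤ t := sqrt_nonneg _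
  have hs : s ^ 2 = 1 - x ^ 2 := sq_sqrt (by nlinarith)
  have ht : t ^ 2 = 1 - y ^ 2 := sq_sqrt (by nlinarith)
  suffices 1 - z ^ 2 ≤ (s + t) ^ 2 from (sqrt_le_left (by positivity)).mpr this
  rcases le_or_gt (x * y) (s * t) with h | h
  · nlinarith
  · have hz' : (x * y - s * t) ^ 2 ≤ z ^ 2 := pow_le_pow_left₀ (by linarith) hz 2
    nlinarith [mul_nonneg hs₀ ht₀,
      mul_nonneg (mul_nonneg hs₀ ht₀) (sub_nonneg.mpr (mul_le_one₀ hx₁ hy₀ hy₁))]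

lemma sqrt_one_sub_sq_le_sin {r θ : ℝ} (hθ₀ : 0 ≤ θ) (hθ : θ ≤ π / 2) (hr : cos θ ≤ r) :
    √(1 - r ^ 2) ≤ sin θ := by
  have hcos : 0 ≤ cos θ := cos_nonneg_of_mem_Icc ⟨by linarith [pi_pos], hθ⟩
  have hsin : 0 ≤ sin θ := sin_nonneg_of_nonneg_of_le_pi hθ₀ (by linarith [pi_pos])
  rw [sqrt_le_left hsin]
  nlinarith [sin_sq_add_cos_sq θ]

lemma sqrt_one_sub_sq_le_of_sqrt_one_sub_sq_le {r s : ℝ} (hr₀ : 0 ≤ r) (hr₁ : r ≤ 1)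
    (h : √(1 - r ^ 2) ≤ s) : √(1 - s ^ 2) ≤ r := by
  have : 1 - r ^ 2 ≤ s ^ 2 := by
    rw [← sq_sqrt (by nlinarith : 0 ≤ 1 - r ^ 2)]
    exact pow_le_pow_left₀ (sqrt_nonneg _) h 2
  rw [sqrt_le_left hr₀]
  linarith

section FidelityDist

variable {𝕜 E : Type*} [RCLike 𝕜] [NormedAddCommGroup E] [InnerProductSpace 𝕜 E]

local notation "⟪" x ", " y "⟫" => inner 𝕜 x y

variable (𝕜) in
noncomputable def fidelityDist (x y : E) : ℝ := √(1 - ‖⟪x, y⟫‖ ^ 2)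

lemma norm_inner_le_one {x y : E} (hx : ‖x‖ = 1) (hy : ‖y‖ = 1) : ‖⟪x, y⟫‖ ≤ 1 := by
  simpa [hx, hy] using norm_inner_le_norm (𝕜 := 𝕜) x y

lemma inner_sub_inner_smul {b : E} (hb : ‖b‖ = 1) (u v : E) :
    ⟪u - ⟪b, u⟫ • b, v - ⟪b, v⟫ • b⟫ = ⟪u, v⟫ - ⟪u, b⟫ * ⟪b, v⟫ := by
  have hbb : ⟪b, b⟫ = 1 := by simp [inner_self_eq_norm_sq_to_K, hb]
  simp only [inner_sub_left, inner_sub_right, inner_smul_left, inner_smul_right, hbb, mul_one,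
    inner_conj_symm]
  ring

lemma norm_sub_inner_smul {b u : E} (hb : ‖b‖ = 1) (hu : ‖u‖ = 1) :
    ‖u - ⟪b, u⟫ • b‖ = fidelityDist 𝕜 u b := by
  have h : ⟪u - ⟪b, u⟫ • b, u - ⟪b, u⟫ • b⟫ = ((1 - ‖⟪u, b⟫‖ ^ 2 : ℝ) : 𝕜) := by
    rw [inner_sub_inner_smul hb, inner_self_eq_norm_sq_to_K, hu, ← inner_conj_symm b u,
      RCLike.mul_conj, norm_inner_symm]
    push_cast
    ring
  rw [fidelityDist, ← sq_eq_sq₀ (norm_nonneg _) (sqrt_nonneg _),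
    sq_sqrt (by simpa using norm_inner_le_one (𝕜 := 𝕜) hu hb)]
  exact_mod_cast congrArg RCLike.re ((inner_self_eq_norm_sq_to_K _).symm.trans h)

lemma norm_inner_mul_sub_le {a b c : E} (ha : ‖a‖ = 1) (hb : ‖b‖ = 1) (hc : ‖c‖ = 1) :
    ‖⟪a, b⟫‖ * ‖⟪b, c⟫‖ - fidelityDist 𝕜 a b * fidelityDist 𝕜 b c ≤ ‖⟪a, c⟫‖ := by
  have hproj : ‖⟪a - ⟪b, a⟫ • b, c - ⟪b, c⟫ • b⟫‖ ≤ fidelityDist 𝕜 a b * fidelityDist 𝕜 b c := by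
    rw [← norm_sub_inner_smul hb ha, fidelityDist, norm_inner_symm b c, ← fidelityDist,
      ← norm_sub_inner_smul hb hc]
    exact norm_inner_le_norm _ _
  rw [inner_sub_inner_smul hb] at hproj
  have := norm_sub_norm_le (⟪a, b⟫ * ⟪b, c⟫) (⟪a, b⟫ * ⟪b, c⟫ - ⟪a, c⟫)
  rw [sub_sub_cancel, norm_mul, norm_sub_rev] at this
  linarith

lemma fidelityDist_triangle {a b c : E} (ha : ‖a‖ = 1) (hb : ‖b‖ = 1) (hc : ‖c‖ = 1) :
    fidelityDist 𝕜 a c ≤ fidelityDist 𝕜 a b + fidelityDist 𝕜 b c :=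
  sqrt_one_sub_sq_le_add (norm_nonneg _) (norm_inner_le_one ha hb) (norm_nonneg _)
    (norm_inner_le_one hb hc) (norm_inner_mul_sub_le ha hb hc)

end FidelityDist

section MatrixOnEuclideanSpace

variable {n : Type*} [Fintype n] [DecidableEq n]

local notation "⟪" x ", " y "⟫" => inner ℂ x y

lemma toEuclideanLin_mul_apply (A B : Matrix n n ℂ) (x : EuclideanSpace ℂ n) :
    toEuclideanLin (A * B) x = toEuclideanLin A (toEuclideanLin B x) := by
  simp [toLpLin_apply, mulVec_mulVec]

lemma inner_toEuclideanLin_left (A : Matrix n n ℂ) (x y : EuclideanSpace ℂ n) :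
    ⟪toEuclideanLin A x, y⟫ = ⟪x, toEuclideanLin Aᴴ y⟫ := by
  rw [toEuclideanLin_conjTranspose_eq_adjoint, LinearMap.adjoint_inner_right]

lemma inner_toEuclideanLin_right (A : Matrix n n ℂ) (x y : EuclideanSpace ℂ n) :
    ⟪x, toEuclideanLin A y⟫ = ⟪toEuclideanLin Aᴴ x, y⟫ := by
  rw [inner_toEuclideanLin_left, conjTranspose_conjTranspose]

lemma inner_toEuclideanLin_toEuclideanLin {U : Matrix n n ℂ} (hU : Uᴴ * U = 1)
    (x y : EuclideanSpace ℂ n) : ⟪toEuclideanLin U x, toEuclideanLin U y⟫ = ⟪x, y⟫ := by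
  rw [inner_toEuclideanLin_left, ← toEuclideanLin_mul_apply, hU]
  simp

lemma norm_toEuclideanLin {U : Matrix n n ℂ} (hU : Uᴴ * U = 1) (x : EuclideanSpace ℂ n) :
    ‖toEuclideanLin U x‖ = ‖x‖ := by
  have h := congrArg RCLike.re (inner_toEuclideanLin_toEuclideanLin hU x x)
  rw [inner_self_eq_norm_sq_to_K, inner_self_eq_norm_sq_to_K] at h
  exact_mod_cast (sq_eq_sq₀ (norm_nonneg _) (norm_nonneg _)).mp (by exact_mod_cast h)

lemma fidelityDist_toEuclideanLin {U : Matrix n n ℂ} (hU : Uᴴ * U = 1)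
    (x y : EuclideanSpace ℂ n) :
    fidelityDist ℂ (toEuclideanLin U x) (toEuclideanLin U y) = fidelityDist ℂ x y := by
  rw [fidelityDist, inner_toEuclideanLin_toEuclideanLin hU, fidelityDist]

lemma opNorm_nonneg_s16 (A : Matrix n n ℂ) : 0 ≤ opNorm A := norm_nonneg _

lemma opNorm_smul (c : ℂ) (A : Matrix n n ℂ) : opNorm (c • A) = ‖c‖ * opNorm A := by
  rw [opNorm, map_smul, map_smul, norm_smul, opNorm]

lemma Matrix.IsHermitian.abs_eigenvalues_le_opNorm {A : Matrix n n ℂ} (hA : A.IsHermitian)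
    (j : n) : |hA.eigenvalues j| ≤ opNorm A := by
  have hv : ‖hA.eigenvectorBasis j‖ = 1 := hA.eigenvectorBasis.orthonormal.1 j
  have hAv :
      toEuclideanLin A (hA.eigenvectorBasis j) = hA.eigenvalues j • hA.eigenvectorBasis j :=
    (WithLp.equiv 2 (n → ℂ)).injective (by simpa using hA.mulVec_eigenvectorBasis j)
  have h := (LinearMap.toContinuousLinearMap (toEuclideanLin A)).le_opNorm (hA.eigenvectorBasis j)
  rwa [LinearMap.coe_toContinuousLinearMap', hAv, norm_smul, hv, Real.norm_eq_abs, mul_one,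
    mul_one] at h

lemma Matrix.IsHermitian.exp_I_smul {A : Matrix n n ℂ} (hA : A.IsHermitian) :
    NormedSpace.exp (Complex.I • A) = (hA.eigenvectorUnitary : Matrix n n ℂ) *
      diagonal (fun j => Complex.exp (Complex.I * hA.eigenvalues j)) *
        star (hA.eigenvectorUnitary : Matrix n n ℂ) := by
  set U : Matrix n n ℂ := ↑hA.eigenvectorUnitary
  have hUU : U * star U = 1 := Matrix.mem_unitaryGroup_iff.mp hA.eigenvectorUnitary.2
  have hU : IsUnit U := Unitary.isUnit_coe
  have hIA : Complex.I • A = U * diagonal (fun j => Complex.I * hA.eigenvalues j) * U⁻¹ := by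
    conv_lhs => rw [hA.spectral_theorem, Unitary.conjStarAlgAut_apply]
    rw [Matrix.inv_eq_right_inv hUU, ← smul_mul_assoc, ← mul_smul_comm, ← diagonal_smul]
    rfl
  rw [hIA, exp_conj U _ hU, exp_diagonal, Matrix.inv_eq_right_inv hUU, Pi.exp_def,
    ← Complex.exp_eq_exp_ℂ]

lemma inner_toEuclideanLin_diagonal (w : n → ℂ) (ξ : EuclideanSpace ℂ n) :
    ⟪ξ, toEuclideanLin (diagonal w) ξ⟫ = ∑ j, w j * (‖ξ j‖ ^ 2 : ℝ) := by
  simp only [PiLp.inner_apply, toLpLin_apply, mulVec_diagonal, RCLike.inner_apply]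
  refine Finset.sum_congr rfl fun j _ => ?_
  rw [Complex.ofReal_pow, ← Complex.mul_conj']
  ring

lemma Matrix.IsHermitian.cos_le_re_inner_exp_I_smul {A : Matrix n n ℂ} (hA : A.IsHermitian)
    {φ : EuclideanSpace ℂ n} (hφ : ‖φ‖ = 1) {θ : ℝ} (hAθ : opNorm A ≤ θ) (hθ : θ ≤ π) :
    cos θ ≤ (⟪φ, toEuclideanLin (NormedSpace.exp (Complex.I • A)) φ⟫).re := by
  set U : Matrix n n ℂ := ↑hA.eigenvectorUnitary
  set ξ := toEuclideanLin Uᴴ φ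
  have hUU : Uᴴᴴ * Uᴴ = 1 := by
    rw [conjTranspose_conjTranspose, ← star_eq_conjTranspose]
    exact Matrix.mem_unitaryGroup_iff.mp hA.eigenvectorUnitary.2
  have hξ : ∑ j, ‖ξ j‖ ^ 2 = 1 := by
    rw [← EuclideanSpace.norm_sq_eq, norm_toEuclideanLin hUU, hφ, one_pow]
  have hinner : ⟪φ, toEuclideanLin (NormedSpace.exp (Complex.I • A)) φ⟫ =
      ∑ j, Complex.exp (Complex.I * hA.eigenvalues j) * (‖ξ j‖ ^ 2 : ℝ) := by
    rw [hA.exp_I_smul, star_eq_conjTranspose, toEuclideanLin_mul_apply, toEuclideanLin_mul_apply,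
      inner_toEuclideanLin_right, inner_toEuclideanLin_diagonal]
  calc cos θ = ∑ j, cos θ * ‖ξ j‖ ^ 2 := by rw [← Finset.mul_sum, hξ, mul_one]
    _ ≤ ∑ j, cos (hA.eigenvalues j) * ‖ξ j‖ ^ 2 := by
      gcongr with j
      rw [← cos_abs (hA.eigenvalues j)]
      exact cos_le_cos_of_nonneg_of_le_pi (abs_nonneg _) hθ
        ((hA.abs_eigenvalues_le_opNorm j).trans hAθ)
    _ = _ := by
      simp only [hinner, Complex.re_sum, Complex.re_mul_ofReal, mul_comm Complex.I,
        Complex.exp_ofReal_mul_I_re]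

noncomputable def gate (H : Matrix n n ℂ) (t : ℝ) : Matrix n n ℂ :=
  NormedSpace.exp ((-Complex.I * (1 + (t : ℂ))) • H)

lemma Matrix.IsHermitian.gate_conjTranspose_mul_gate {H : Matrix n n ℂ} (hH : H.IsHermitian)
    (s t : ℝ) :
    (gate H s)ᴴ * gate H t = NormedSpace.exp (Complex.I • (((s - t : ℝ) : ℂ) • H)) := by
  rw [gate, gate, ← exp_conjTranspose, conjTranspose_smul, hH.eq,
    ← exp_add_of_commute _ _ (((Commute.refl H).smul_left _).smul_right _), ← add_smul, smul_smul]
  congr 2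
  simp only [star_mul', star_neg, Complex.star_def, Complex.conj_I, map_add, map_one,
    Complex.conj_ofReal, Complex.ofReal_sub]
  ring

lemma Matrix.IsHermitian.gate_conjTranspose_mul_self {H : Matrix n n ℂ} (hH : H.IsHermitian)
    (t : ℝ) : (gate H t)ᴴ * gate H t = 1 := by
  rw [hH.gate_conjTranspose_mul_gate, sub_self, Complex.ofReal_zero, zero_smul, smul_zero,
    NormedSpace.exp_zero]

lemma Matrix.IsHermitian.fidelityDist_gate_le {H : Matrix n n ℂ} (hH : H.IsHermitian)
    {ψ : EuclideanSpace ℂ n} (hψ : ‖ψ‖ = 1) {t : ℝ} (ht : opNorm H * |t| ≤ π / 2) :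
    fidelityDist ℂ (toEuclideanLin (gate H t) ψ) (toEuclideanLin (gate H 0) ψ) ≤
      sin (opNorm H * |t|) := by
  have hA : ((t : ℂ) • H).IsHermitian := hH.smul (Complex.conj_ofReal t)
  have hAθ : opNorm ((t : ℂ) • H) ≤ opNorm H * |t| := by
    rw [opNorm_smul, Complex.norm_real, Real.norm_eq_abs, mul_comm]
  rw [fidelityDist, inner_toEuclideanLin_left, ← toEuclideanLin_mul_apply,
    hH.gate_conjTranspose_mul_gate, sub_zero]
  exact sqrt_one_sub_sq_le_sin (mul_nonneg (opNorm_nonneg_s16 H) (abs_nonneg t)) ht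
    ((hA.cos_le_re_inner_exp_I_smul hψ hAθ (by linarith [pi_pos])).trans (Complex.re_le_norm _))

end MatrixOnEuclideanSpace

section Circuit

variable {d : ℕ}

lemma circuitState_of_fin_zero (H : Fin 0 → Matrix (Fin d) (Fin d) ℂ)
    (ψ₀ : EuclideanSpace ℂ (Fin d)) (ε : Fin 0 → ℝ) : circuitState H ψ₀ ε = ψ₀ := by
  simp [circuitState]

lemma circuitState_succ {N : ℕ} (H : Fin (N + 1) → Matrix (Fin d) (Fin d) ℂ)
    (ψ₀ : EuclideanSpace ℂ (Fin d)) (ε : Fin (N + 1) → ℝ) :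
    circuitState H ψ₀ ε = toEuclideanLin (gate (H 0) (ε 0))
      (circuitState (fun i => H i.succ) ψ₀ (fun i => ε i.succ)) := by
  rw [circuitState, List.ofFn_succ, List.prod_cons, toEuclideanLin_mul_apply]
  rfl

lemma norm_circuitState {N : ℕ} {H : Fin N → Matrix (Fin d) (Fin d) ℂ}
    (hH : ∀ i, (H i).IsHermitian) {ψ₀ : EuclideanSpace ℂ (Fin d)} (hψ₀ : ‖ψ₀‖ = 1)
    (ε : Fin N → ℝ) : ‖circuitState H ψ₀ ε‖ = 1 := by
  induction N with
  | zero => rwa [circuitState_of_fin_zero]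
  | succ N ih =>
    rw [circuitState_succ, norm_toEuclideanLin ((hH 0).gate_conjTranspose_mul_self _)]
    exact ih (fun i => hH i.succ) _

lemma fidelityDist_circuitState_le {N : ℕ} {H : Fin N → Matrix (Fin d) (Fin d) ℂ}
    (hH : ∀ i, (H i).IsHermitian) {ψ₀ : EuclideanSpace ℂ (Fin d)} (hψ₀ : ‖ψ₀‖ = 1)
    {ε : Fin N → ℝ} (hε : ∀ i, opNorm (H i) * |ε i| ≤ π / 2) :
    fidelityDist ℂ (circuitState H ψ₀ ε) (circuitState H ψ₀ 0) ≤
      ∑ i, sin (opNorm (H i) * |ε i|) := by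
  induction N with
  | zero => simp [circuitState_of_fin_zero, fidelityDist, inner_self_eq_norm_sq_to_K, hψ₀]
  | succ N ih =>
    have hH' : ∀ i, (H (Fin.succ i)).IsHermitian := fun i => hH i.succ
    set ψ := circuitState (fun i => H i.succ) ψ₀ (fun i => ε i.succ)
    set ψ' := circuitState (fun i => H i.succ) ψ₀ 0
    set G := gate (H 0) (ε 0)
    have hG : Gᴴ * G = 1 := (hH 0).gate_conjTranspose_mul_self (ε 0)
    have hG₀ := (hH 0).gate_conjTranspose_mul_self 0
    have hψ : ‖ψ‖ = 1 := norm_circuitState hH' hψ₀ _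
    have hψ' : ‖ψ'‖ = 1 := norm_circuitState hH' hψ₀ 0
    rw [circuitState_succ, circuitState_succ, Fin.sum_univ_succ]
    calc fidelityDist ℂ (toEuclideanLin G ψ) (toEuclideanLin (gate (H 0) 0) ψ')
        ≤ fidelityDist ℂ (toEuclideanLin G ψ) (toEuclideanLin G ψ') +
            fidelityDist ℂ (toEuclideanLin G ψ') (toEuclideanLin (gate (H 0) 0) ψ') :=
          fidelityDist_triangle (by rwa [norm_toEuclideanLin hG]) (by rwa [norm_toEuclideanLin hG])
            (by rwa [norm_toEuclideanLin hG₀])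
      _ ≤ ∑ i : Fin N, sin (opNorm (H i.succ) * |ε i.succ|) + sin (opNorm (H 0) * |ε 0|) := by
        rw [fidelityDist_toEuclideanLin hG]
        exact add_le_add (ih hH' fun i => hε i.succ) ((hH 0).fidelityDist_gate_le hψ' (hε 0))
      _ = _ := add_comm _ _

end Circuit

theorem sine_based_worst_case_fidelity_general {d N : ℕ} (H : Fin N → Matrix (Fin d) (Fin d) ℂ)
    (hH : ∀ i, (H i).IsHermitian)
    (ψ₀ : EuclideanSpace ℂ (Fin d)) (hψ₀ : ‖ψ₀‖ = 1)
    (εbar : ℝ)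
    (hsmall : ∀ i, opNorm (H i) * εbar ≤ Real.pi / 2)
    (ε : Fin N → ℝ) (hε : ‖ε‖ ≤ εbar) :
    Real.sqrt (1 - (∑ i, Real.sin (opNorm (H i) * εbar)) ^ 2) ≤
      ‖(inner ℂ (circuitState H ψ₀ ε) (circuitState H ψ₀ 0) : ℂ)‖ := by
  have hεi : ∀ i, opNorm (H i) * |ε i| ≤ opNorm (H i) * εbar := fun i =>
    mul_le_mul_of_nonneg_left ((norm_le_pi_norm ε i).trans hε) (opNorm_nonneg_s16 _)
  have hsin : ∑ i, sin (opNorm (H i) * |ε i|) ≤ ∑ i, sin (opNorm (H i) * εbar) :=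
    Finset.sum_le_sum fun i _ => sin_le_sin_of_le_of_le_pi_div_two
      (by linarith [pi_pos, mul_nonneg (opNorm_nonneg_s16 (H i)) (abs_nonneg (ε i))]) (hsmall i) (hεi i)
  refine sqrt_one_sub_sq_le_of_sqrt_one_sub_sq_le (norm_nonneg _)
    (norm_inner_le_one (norm_circuitState hH hψ₀ ε) (norm_circuitState hH hψ₀ 0)) ?_
  exact (fidelityDist_circuitState_le hH hψ₀ fun i => (hεi i).trans (hsmall i)).trans hsin

/-- sine-based worst-case fidelity bound, Appendix C of the paper: if `ε̄ ≥ 0`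
satisfies `‖Hᵢ‖₂·ε̄ ≤ π/2` for all `i` and `Σᵢ sin(‖Hᵢ‖₂·ε̄) ≤ 1`, then for every `ε` with
`‖ε‖_∞ ≤ ε̄`, the fidelity between the noisy state `ψ(ε)` and the ideal state `ψ̂ = ψ(0)`
satisfies `|⟨ψ(ε), ψ̂⟩| ≥ √(1 − (Σᵢ sin(‖Hᵢ‖₂·ε̄))²)`. -/
theorem sine_based_worst_case_fidelity {d N : ℕ} (H : Fin N → Matrix (Fin d) (Fin d) ℂ)
    (hH : ∀ i, (H i).IsHermitian)
    (ψ₀ : EuclideanSpace ℂ (Fin d)) (hψ₀ : ‖ψ₀‖ = 1)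
    (εbar : ℝ) (hεbar : 0 ≤ εbar)
    (hsmall : ∀ i, opNorm (H i) * εbar ≤ Real.pi / 2)
    (hsum : ∑ i, Real.sin (opNorm (H i) * εbar) ≤ 1)
    (ε : Fin N → ℝ) (hε : ‖ε‖ ≤ εbar) :
    Real.sqrt (1 - (∑ i, Real.sin (opNorm (H i) * εbar)) ^ 2) ≤
      ‖(inner ℂ (circuitState H ψ₀ ε) (circuitState H ψ₀ 0) : ℂ)‖ :=
  sine_based_worst_case_fidelity_general H hH ψ₀ hψ₀ εbar hsmall ε hε
end

section
/- Let H₁, …, H_N be d×d complex Hermitian matrices, let φ₁, …, φ_N be real numbers, let ψ₀ ∈ ℂ^d be a unit vector, and for ε ∈ ℝ^N define ψ(ε) = exp(−i(1+ε₁)H₁)···exp(−i(1+ε_N)H_N)·ψ₀, with ideal state ψ̂ = ψ(0). Then for any ε̄ ≥ 0 and any ε ∈ ℝ^N with ‖ε‖_∞ ≤ ε̄: |⟨ψ(ε), ψ̂⟩| ≥ 1 − (Σ_{i=1}^N ‖H_i + φ_i·I_d‖₂)²·ε̄²/2, where I_d is the d×d identity matrix. -/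
set_option autoImplicit false

open scoped Matrix

/-!
Adding `φᵢ • 1` to `Hᵢ` multiplies the `i`-th gate by the scalar `exp (-i (1 + εᵢ) φᵢ)`, so every
circuit state only acquires a global phase and the fidelity is unchanged; it therefore suffices to
prove the bound for the Hermitian matrices `Hᵢ + φᵢ • 1` themselves. For self-adjoint `a` in a
C⋆-algebra, `s ↦ exp (-i s a)` is a path of unitaries whose derivative has norm `‖a‖`, so
`‖exp (-i s a) - exp (-i t a)‖ ≤ ‖a‖ |s - t|`. Telescoping over a product of unitaries bounds the
distance between the noisy and the ideal circuit unitary by `∑ ‖Hᵢ‖ |εᵢ|`, and for unit vectors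
`|⟪x, y⟫| ≥ re ⟪x, y⟫ = 1 - ‖x - y‖² / 2`.
-/

open NormedSpace

theorem List.prod_ofFn_smul {S M : Type*} [CommMonoid S] [Monoid M] [MulAction S M]
    [IsScalarTower S M M] [SMulCommClass S M M] {N : ℕ} (c : Fin N → S) (u : Fin N → M) :
    (List.ofFn fun i => c i • u i).prod = (∏ i, c i) • (List.ofFn u).prod := by
  induction N with
  | zero => simp
  | succ n ih =>
    rw [List.ofFn_succ, List.ofFn_succ, List.prod_cons, List.prod_cons, ih, Fin.prod_univ_succ,
      smul_mul_smul_comm]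

theorem CStarRing.norm_prod_ofFn_sub_prod_ofFn_le {R : Type*} [NormedRing R] [StarRing R]
    [CStarRing R] {N : ℕ} {u v : Fin N → R} (hu : ∀ i, u i ∈ unitary R)
    (hv : ∀ i, v i ∈ unitary R) :
    ‖(List.ofFn u).prod - (List.ofFn v).prod‖ ≤ ∑ i, ‖u i - v i‖ := by
  induction N with
  | zero => simp
  | succ n ih =>
    set P := (List.ofFn fun i : Fin n => u i.succ).prod
    set Q := (List.ofFn fun i : Fin n => v i.succ).prod
    have hQ : Q ∈ unitary R :=
      Submonoid.list_prod_mem _ (by simpa using fun i : Fin n => hv i.succ)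
    rw [List.ofFn_succ, List.ofFn_succ, List.prod_cons, List.prod_cons, Fin.sum_univ_succ]
    calc ‖u 0 * P - v 0 * Q‖ = ‖u 0 * (P - Q) + (u 0 - v 0) * Q‖ := by noncomm_ring
      _ ≤ ‖P - Q‖ + ‖u 0 - v 0‖ := by
        grw [norm_add_le, CStarRing.norm_mem_unitary_mul _ (hu 0),
          CStarRing.norm_mul_mem_unitary _ hQ]
      _ ≤ ‖u 0 - v 0‖ + ∑ i : Fin n, ‖u i.succ - v i.succ‖ := by
        linarith [ih (fun i => hu i.succ) (fun i => hv i.succ)]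

theorem one_sub_norm_sub_sq_div_two_le_norm_inner {𝕜 E : Type*} [RCLike 𝕜]
    [NormedAddCommGroup E] [InnerProductSpace 𝕜 E] {x y : E} (hx : ‖x‖ = 1) (hy : ‖y‖ = 1) :
    1 - ‖x - y‖ ^ 2 / 2 ≤ ‖(inner 𝕜 x y : 𝕜)‖ := by
  have hsub := norm_sub_sq (𝕜 := 𝕜) x y
  have hre := RCLike.re_le_norm (inner 𝕜 x y : 𝕜)
  rw [hx, hy] at hsub
  linarith

theorem one_sub_norm_sub_sq_div_two_le_norm_inner_apply {𝕜 E : Type*} [RCLike 𝕜]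
    [NormedAddCommGroup E] [InnerProductSpace 𝕜 E] [CompleteSpace E] {U V : E →L[𝕜] E}
    (hU : U ∈ unitary (E →L[𝕜] E)) (hV : V ∈ unitary (E →L[𝕜] E)) {x : E} (hx : ‖x‖ = 1) :
    1 - ‖U - V‖ ^ 2 / 2 ≤ ‖(inner 𝕜 (U x) (V x) : 𝕜)‖ := by
  have hUV : ‖U x - V x‖ ≤ ‖U - V‖ := by
    simpa [hx] using (U - V).le_opNorm x
  calc 1 - ‖U - V‖ ^ 2 / 2 ≤ 1 - ‖U x - V x‖ ^ 2 / 2 := by gcongr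
    _ ≤ ‖(inner 𝕜 (U x) (V x) : 𝕜)‖ := one_sub_norm_sub_sq_div_two_le_norm_inner
        (by rw [U.norm_map_of_mem_unitary hU, hx]) (by rw [V.norm_map_of_mem_unitary hV, hx])

theorem NormedSpace.exp_add_algebraMap {A : Type*} [NormedRing A] [NormedAlgebra ℂ A]
    [CompleteSpace A] (x : A) (z : ℂ) :
    exp (x + algebraMap ℂ A z) = Complex.exp z • exp x := by
  let +nondep : NormedAlgebra ℚ A := .restrictScalars ℚ ℂ A
  rw [exp_add_of_commute (Algebra.commutes z x).symm, ← algebraMap_exp_comm,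
    ← Complex.exp_eq_exp_ℂ, Algebra.algebraMap_eq_smul_one, mul_smul_comm, mul_one]

section CStarAlgebra

variable {A : Type*} [CStarAlgebra A] {N : ℕ}

noncomputable def timeEvolution (a : A) (s : ℝ) : A := exp ((-Complex.I * s) • a)

theorem timeEvolution_mem_unitary {a : A} (ha : IsSelfAdjoint a) (s : ℝ) :
    timeEvolution a s ∈ unitary A := by
  let +nondep : NormedAlgebra ℚ A := .restrictScalars ℚ ℂ A
  apply exp_mem_unitary_of_mem_skewAdjoint
  rw [skewAdjoint.mem_iff, star_smul, ha.star_eq, ← neg_smul]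
  congr 1
  simp

theorem timeEvolution_zero (a : A) : timeEvolution a 0 = 1 := by
  simp [timeEvolution]

theorem timeEvolution_add (a : A) (s t : ℝ) :
    timeEvolution a (s + t) = timeEvolution a s * timeEvolution a t := by
  let +nondep : NormedAlgebra ℚ A := .restrictScalars ℚ ℂ A
  rw [timeEvolution, timeEvolution, timeEvolution, ← exp_add_of_commute]
  · congr 1; push_cast; module
  · exact ((Commute.refl a).smul_left _).smul_right _

theorem hasDerivAt_timeEvolution (a : A) (s : ℝ) :
    HasDerivAt (timeEvolution a) (timeEvolution a s * (-Complex.I • a)) s := by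
  have h_real_smul : ∀ t : ℝ, timeEvolution a t = exp (t • (-Complex.I • a)) := fun t => by
    rw [timeEvolution, ← Complex.coe_smul, smul_smul, mul_comm]
  rw [funext h_real_smul]
  exact hasDerivAt_exp_smul_const (-Complex.I • a) s

theorem norm_timeEvolution_sub_one_le {a : A} (ha : IsSelfAdjoint a) (t : ℝ) :
    ‖timeEvolution a t - 1‖ ≤ ‖a‖ * |t| := by
  have h_deriv_le : ∀ s, ‖timeEvolution a s * (-Complex.I • a)‖ ≤ ‖a‖ := fun s => by
    simp [CStarRing.norm_mem_unitary_mul _ (timeEvolution_mem_unitary ha s), norm_smul]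
  simpa [timeEvolution_zero] using Convex.norm_image_sub_le_of_norm_hasDerivWithin_le
    (fun s _ => (hasDerivAt_timeEvolution a s).hasDerivWithinAt) (fun s _ => h_deriv_le s)
    convex_univ (Set.mem_univ 0) (Set.mem_univ t)

theorem norm_timeEvolution_sub_le {a : A} (ha : IsSelfAdjoint a) (s t : ℝ) :
    ‖timeEvolution a s - timeEvolution a t‖ ≤ ‖a‖ * |s - t| := by
  calc ‖timeEvolution a s - timeEvolution a t‖
      = ‖timeEvolution a t * (timeEvolution a (s - t) - 1)‖ := by
        rw [mul_sub, mul_one, ← timeEvolution_add, add_sub_cancel]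
    _ ≤ ‖a‖ * |s - t| := by
        rw [CStarRing.norm_mem_unitary_mul _ (timeEvolution_mem_unitary ha t)]
        exact norm_timeEvolution_sub_one_le ha _

theorem timeEvolution_add_smul_one (a : A) (c s : ℝ) :
    timeEvolution (a + (c : ℂ) • 1) s =
      Complex.exp (↑(-(s * c)) * Complex.I) • timeEvolution a s := by
  have h_scalar : (-Complex.I * s) • (a + (c : ℂ) • 1) =
      (-Complex.I * s) • a + algebraMap ℂ A (↑(-(s * c)) * Complex.I) := by
    rw [Algebra.algebraMap_eq_smul_one]; push_cast; module
  rw [timeEvolution, h_scalar, exp_add_algebraMap, timeEvolution]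

noncomputable def circuitUnitary (a : Fin N → A) (s : Fin N → ℝ) : A :=
  (List.ofFn fun i => timeEvolution (a i) (s i)).prod

theorem circuitUnitary_mem_unitary {a : Fin N → A} (ha : ∀ i, IsSelfAdjoint (a i))
    (s : Fin N → ℝ) : circuitUnitary a s ∈ unitary A :=
  Submonoid.list_prod_mem _ (by simpa using fun i => timeEvolution_mem_unitary (ha i) (s i))

theorem norm_circuitUnitary_sub_le {a : Fin N → A} (ha : ∀ i, IsSelfAdjoint (a i))
    (s t : Fin N → ℝ) :
    ‖circuitUnitary a s - circuitUnitary a t‖ ≤ ∑ i, ‖a i‖ * |s i - t i| :=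
  (CStarRing.norm_prod_ofFn_sub_prod_ofFn_le (fun i => timeEvolution_mem_unitary (ha i) (s i))
    (fun i => timeEvolution_mem_unitary (ha i) (t i))).trans
    (Finset.sum_le_sum fun i _ => norm_timeEvolution_sub_le (ha i) (s i) (t i))

theorem circuitUnitary_add_smul_one (a : Fin N → A) (c s : Fin N → ℝ) :
    circuitUnitary (fun i => a i + (c i : ℂ) • 1) s =
      Complex.exp (↑(-∑ i, s i * c i) * Complex.I) • circuitUnitary a s := by
  simp only [circuitUnitary, timeEvolution_add_smul_one, List.prod_ofFn_smul, ← Complex.exp_sum]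
  push_cast
  rw [← Finset.sum_mul, Finset.sum_neg_distrib]

end CStarAlgebra

section Matrix

-- With the L2 operator norm, `‖A‖` and `opNorm A` agree definitionally and matrices form a
-- C⋆-algebra.
open scoped Matrix.Norms.L2Operator

variable {d N : ℕ}

theorem circuitState_eq_circuitUnitary (H : Fin N → Matrix (Fin d) (Fin d) ℂ)
    (ψ₀ : EuclideanSpace ℂ (Fin d)) (ε : Fin N → ℝ) :
    circuitState H ψ₀ ε = Matrix.toEuclideanCLM (𝕜 := ℂ) (circuitUnitary H (1 + ε)) ψ₀ := by
  simp only [circuitState, circuitUnitary, timeEvolution, Pi.add_apply, Pi.one_apply]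
  push_cast
  rfl

theorem norm_inner_circuitState_add_smul_one (H : Fin N → Matrix (Fin d) (Fin d) ℂ)
    (φ : Fin N → ℝ) (ψ₀ : EuclideanSpace ℂ (Fin d)) (ε δ : Fin N → ℝ) :
    ‖(inner ℂ (circuitState (fun i => H i + (φ i : ℂ) • 1) ψ₀ ε)
        (circuitState (fun i => H i + (φ i : ℂ) • 1) ψ₀ δ) : ℂ)‖ =
      ‖(inner ℂ (circuitState H ψ₀ ε) (circuitState H ψ₀ δ) : ℂ)‖ := by
  simp only [circuitState_eq_circuitUnitary, circuitUnitary_add_smul_one, map_smul,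
    smul_apply, inner_smul_left, inner_smul_right, norm_mul, RCLike.norm_conj,
    Complex.norm_exp_ofReal_mul_I, one_mul]

theorem circuit_worst_case_fidelity (H : Fin N → Matrix (Fin d) (Fin d) ℂ)
    (hH : ∀ i, (H i).IsHermitian) (ψ₀ : EuclideanSpace ℂ (Fin d)) (hψ₀ : ‖ψ₀‖ = 1)
    (εbar : ℝ) (ε : Fin N → ℝ) (hε : ‖ε‖ ≤ εbar) :
    1 - (∑ i, opNorm (H i)) ^ 2 * εbar ^ 2 / 2 ≤
      ‖(inner ℂ (circuitState H ψ₀ ε) (circuitState H ψ₀ 0) : ℂ)‖ := by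
  have hU : ∀ δ, Matrix.toEuclideanCLM (𝕜 := ℂ) (circuitUnitary H (1 + δ)) ∈ unitary _ :=
    fun δ => Unitary.map_mem _ (circuitUnitary_mem_unitary hH _)
  have hdist : ‖circuitUnitary H (1 + ε) - circuitUnitary H (1 + 0)‖ ≤
      (∑ i, opNorm (H i)) * εbar := by
    refine (norm_circuitUnitary_sub_le hH _ _).trans ?_
    rw [Finset.sum_mul]
    refine Finset.sum_le_sum fun i _ => mul_le_mul_of_nonneg_left ?_ (norm_nonneg (H i))
    simpa using (norm_le_pi_norm ε i).trans hε
  rw [circuitState_eq_circuitUnitary, circuitState_eq_circuitUnitary]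
  refine le_trans ?_ (one_sub_norm_sub_sq_div_two_le_norm_inner_apply (hU ε) (hU 0) hψ₀)
  rw [← map_sub, ← mul_pow]
  gcongr
  exact hdist

end Matrix

theorem circuit_worst_case_fidelity_phase_shift_general {d N : ℕ}
    (H : Fin N → Matrix (Fin d) (Fin d) ℂ) (hH : ∀ i, (H i).IsHermitian)
    (φ : Fin N → ℝ)
    (ψ₀ : EuclideanSpace ℂ (Fin d)) (hψ₀ : ‖ψ₀‖ = 1)
    (εbar : ℝ) (ε : Fin N → ℝ) (hε : ‖ε‖ ≤ εbar) :
    1 - (∑ i, opNorm (H i + (φ i : ℂ) • (1 : Matrix (Fin d) (Fin d) ℂ))) ^ 2 * εbar ^ 2 / 2 ≤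
      ‖(inner ℂ (circuitState H ψ₀ ε) (circuitState H ψ₀ 0) : ℂ)‖ := by
  rw [← norm_inner_circuitState_add_smul_one H φ]
  refine circuit_worst_case_fidelity _ (fun i => (hH i).add ?_) ψ₀ hψ₀ εbar ε hε
  exact Matrix.isHermitian_one.smul (Complex.conj_ofReal (φ i))

/-- Remark 1 of the paper: since replacing `Hᵢ` by `Hᵢ + φᵢ·I` changes each
gate only by a global phase, the worst-case fidelity bound of Theorem 2 holds with `Hᵢ`
replaced by `Hᵢ + φᵢ·I` for any real numbers `φᵢ`: for any `ε̄ ≥ 0` and any `ε` with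
`‖ε‖_∞ ≤ ε̄`, `|⟨ψ(ε), ψ̂⟩| ≥ 1 − (Σᵢ ‖Hᵢ + φᵢ·I‖₂)²·ε̄²/2`. -/
theorem circuit_worst_case_fidelity_phase_shift {d N : ℕ}
    (H : Fin N → Matrix (Fin d) (Fin d) ℂ) (hH : ∀ i, (H i).IsHermitian)
    (φ : Fin N → ℝ)
    (ψ₀ : EuclideanSpace ℂ (Fin d)) (hψ₀ : ‖ψ₀‖ = 1)
    (εbar : ℝ) (hεbar : 0 ≤ εbar) (ε : Fin N → ℝ) (hε : ‖ε‖ ≤ εbar) :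
    1 - (∑ i, opNorm (H i + (φ i : ℂ) • (1 : Matrix (Fin d) (Fin d) ℂ))) ^ 2 * εbar ^ 2 / 2 ≤
      ‖(inner ℂ (circuitState H ψ₀ ε) (circuitState H ψ₀ 0) : ℂ)‖ :=
  circuit_worst_case_fidelity_phase_shift_general H hH φ ψ₀ hψ₀ εbar ε hε
end
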